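/- arXiv:1803.05533 — 3 statements merged into one kernel-verified Lean document; each statement's English description precedes it below -/
import Mathlib

section
/- Given a finite family of intervals I_1, ..., I_d of real numbers (or of integers), there exists a subfamily of pairwise disjoint intervals (I_j)_{j∈J} such that the sum of the lengths of the intervals I_j for j ∈ J is at least half the length of the union of all the intervals I_1, ..., I_d. -/
/-!
Discard intervals covered by the others until none is; the remaining family has the same union
and is irredundant. In an irredundant family the left endpoints are distinct and the right
endpoints increase with them, and two intervals with a third one starting strictly between them
are disjoint, since otherwise the two would cover the third. Hence the intervals of even and of
odd rank (in the order of their left endpoints) form two disjoint subfamilies whose total lengths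
add up to at least the measure of the union, and the longer of the two has at least half of it.
-/

open MeasureTheory Set
open scoped Finset

variable {ι α : Type*}

def IsIrredundant [DecidableEq ι] (f : ι → Set α) (G : Finset ι) : Prop :=
  ∀ k ∈ G, ¬f k ⊆ ⋃ i ∈ G.erase k, f i

def leftRank [LinearOrder α] (s : ι → α) (G : Finset ι) (j : ι) : ℕ :=
  #{i ∈ G | s i < s j}

theorem exists_subset_isIrredundant_biUnion_eq [DecidableEq ι] (f : ι → Set α)
    (F : Finset ι) :
    ∃ G ⊆ F, IsIrredundant f G ∧ ⋃ i ∈ G, f i = ⋃ i ∈ F, f i := by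
  induction F using Finset.strongInduction with
  | _ F ih =>
    by_cases hF : IsIrredundant f F
    · exact ⟨F, subset_rfl, hF, rfl⟩
    obtain ⟨k, hk, hcovered⟩ : ∃ k ∈ F, f k ⊆ ⋃ i ∈ F.erase k, f i := by
      simpa [IsIrredundant] using hF
    obtain ⟨G, hGF, hG, hGU⟩ := ih (F.erase k) (Finset.erase_ssubset hk)
    refine ⟨G, hGF.trans (Finset.erase_subset k F), hG, hGU.trans ?_⟩
    conv_rhs => rw [← Finset.insert_erase hk, Finset.set_biUnion_insert]
    exact (union_eq_self_of_subset_left hcovered).symm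

namespace IsIrredundant

variable [DecidableEq ι] {f : ι → Set α} {G : Finset ι} {i j k : ι}

theorem nonempty (hG : IsIrredundant f G) (hk : k ∈ G) : (f k).Nonempty :=
  nonempty_iff_ne_empty.2 fun h => hG k hk (h ▸ empty_subset _)

theorem not_subset_union (hG : IsIrredundant f G) (hk : k ∈ G) (hi : i ∈ G) (hj : j ∈ G)
    (hki : k ≠ i) (hkj : k ≠ j) : ¬f k ⊆ f i ∪ f j := fun h =>
  hG k hk <| h.trans <| union_subset
    (Finset.subset_set_biUnion_of_mem (Finset.mem_erase.2 ⟨hki.symm, hi⟩))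
    (Finset.subset_set_biUnion_of_mem (Finset.mem_erase.2 ⟨hkj.symm, hj⟩))

theorem not_subset (hG : IsIrredundant f G) (hi : i ∈ G) (hj : j ∈ G) (hij : i ≠ j) :
    ¬f i ⊆ f j := fun h =>
  hG.not_subset_union hi hj hj hij hij (h.trans subset_union_left)

section Intervals

variable [LinearOrder α] {s t : ι → α}

theorem left_lt_right (hG : IsIrredundant (fun j => Ico (s j) (t j)) G) (hk : k ∈ G) :
    s k < t k :=
  nonempty_Ico.1 (hG.nonempty hk)

theorem left_injOn (hG : IsIrredundant (fun j => Ico (s j) (t j)) G) (hi : i ∈ G) (hj : j ∈ G)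
    (h : s i = s j) : i = j := by
  by_contra hij
  rcases le_total (t i) (t j) with hle | hle
  · exact hG.not_subset hi hj hij (Ico_subset_Ico h.ge hle)
  · exact hG.not_subset hj hi (Ne.symm hij) (Ico_subset_Ico h.le hle)

theorem right_lt_right (hG : IsIrredundant (fun j => Ico (s j) (t j)) G) (hi : i ∈ G)
    (hj : j ∈ G) (h : s i < s j) : t i < t j := by
  by_contra! hle
  exact hG.not_subset hj hi (fun hji => h.ne' (congrArg s hji)) (Ico_subset_Ico h.le hle)

theorem right_le_left_of_lt_of_lt (hG : IsIrredundant (fun j => Ico (s j) (t j)) G) (hi : i ∈ G)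
    (hj : j ∈ G) (hk : k ∈ G) (hik : s i < s k) (hkj : s k < s j) : t i ≤ s j := by
  by_contra! hji
  refine hG.not_subset_union hk hi hj (fun h => hik.ne' (congrArg s h))
    (fun h => hkj.ne (congrArg s h)) ?_
  rintro x ⟨hkx, hxk⟩
  by_cases hxi : x < t i
  · exact Or.inl ⟨hik.le.trans hkx, hxi⟩
  · exact Or.inr ⟨(hji.trans_le (not_lt.1 hxi)).le, hxk.trans (hG.right_lt_right hk hj hkj)⟩

theorem leftRank_eq_succ (hG : IsIrredundant (fun j => Ico (s j) (t j)) G) (hi : i ∈ G)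
    (hij : s i < s j) (hgap : ¬∃ k ∈ G, s i < s k ∧ s k < s j) :
    leftRank s G j = leftRank s G i + 1 := by
  have hfilter : {l ∈ G | s l < s j} = insert i {l ∈ G | s l < s i} := by
    ext l
    simp only [Finset.mem_filter, Finset.mem_insert]
    constructor
    · rintro ⟨hl, hlj⟩
      rcases lt_trichotomy (s l) (s i) with h | h | h
      · exact Or.inr ⟨hl, h⟩
      · exact Or.inl (hG.left_injOn hl hi h)
      · exact absurd ⟨l, hl, h, hlj⟩ hgap
    · rintro (rfl | ⟨hl, hli⟩)
      · exact ⟨hi, hij⟩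
      · exact ⟨hl, hli.trans hij⟩
  rw [leftRank, hfilter, Finset.card_insert_of_notMem (by simp), leftRank]

theorem disjoint_of_even_leftRank_iff (hG : IsIrredundant (fun j => Ico (s j) (t j)) G)
    (hi : i ∈ G) (hj : j ∈ G) (hij : s i < s j)
    (hparity : Even (leftRank s G i) ↔ Even (leftRank s G j)) :
    Disjoint (Ico (s i) (t i)) (Ico (s j) (t j)) := by
  by_cases hgap : ∃ k ∈ G, s i < s k ∧ s k < s j
  · obtain ⟨k, hk, hik, hkj⟩ := hgap
    have hti := hG.right_le_left_of_lt_of_lt hi hj hk hik hkj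
    exact disjoint_left.2 fun x hxi hxj => (hxi.2.trans_le hti).not_ge hxj.1
  · rw [hG.leftRank_eq_succ hi hij hgap, Nat.even_add_one] at hparity
    exact (iff_not_self hparity).elim

theorem pairwiseDisjoint_of_even_leftRank_iff (hG : IsIrredundant (fun j => Ico (s j) (t j)) G)
    {S : Finset ι} (hSG : S ⊆ G)
    (hS : ∀ i ∈ S, ∀ j ∈ S, (Even (leftRank s G i) ↔ Even (leftRank s G j))) :
    (S : Set ι).PairwiseDisjoint fun j => Ico (s j) (t j) := by
  intro i hi j hj hij
  rcases lt_or_gt_of_ne fun h => hij (hG.left_injOn (hSG hi) (hSG hj) h) with h | h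
  · exact hG.disjoint_of_even_leftRank_iff (hSG hi) (hSG hj) h (hS i hi j hj)
  · exact (hG.disjoint_of_even_leftRank_iff (hSG hj) (hSG hi) h (hS j hj i hi)).symm

theorem exists_pairwiseDisjoint_union_eq (hG : IsIrredundant (fun j => Ico (s j) (t j)) G) :
    ∃ A B : Finset ι, Disjoint A B ∧ A ∪ B = G ∧
      (A : Set ι).PairwiseDisjoint (fun j => Ico (s j) (t j)) ∧
      (B : Set ι).PairwiseDisjoint (fun j => Ico (s j) (t j)) := by
  refine ⟨{j ∈ G | Even (leftRank s G j)}, {j ∈ G | ¬Even (leftRank s G j)},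
    Finset.disjoint_filter_filter_not _ _ _, Finset.filter_union_filter_not_eq _ _,
    hG.pairwiseDisjoint_of_even_leftRank_iff (Finset.filter_subset _ _) fun i hi j hj => ?_,
    hG.pairwiseDisjoint_of_even_leftRank_iff (Finset.filter_subset _ _) fun i hi j hj => ?_⟩
  · exact iff_of_true (Finset.mem_filter.1 hi).2 (Finset.mem_filter.1 hj).2
  · exact iff_of_false (Finset.mem_filter.1 hi).2 (Finset.mem_filter.1 hj).2

end Intervals

end IsIrredundant

theorem toReal_volume_biUnion_Ico_le_sum (S : Finset ι) {s t : ι → ℝ}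
    (h : ∀ j ∈ S, s j ≤ t j) :
    (volume (⋃ j ∈ S, Ico (s j) (t j))).toReal ≤ ∑ j ∈ S, (t j - s j) := by
  have hlen : ∀ j ∈ S, 0 ≤ t j - s j := fun j hj => sub_nonneg.2 (h j hj)
  refine ENNReal.toReal_le_of_le_ofReal (Finset.sum_nonneg hlen) ?_
  calc volume (⋃ j ∈ S, Ico (s j) (t j)) ≤ ∑ j ∈ S, volume (Ico (s j) (t j)) :=
        measure_biUnion_finset_le _ _
    _ = ENNReal.ofReal (∑ j ∈ S, (t j - s j)) := by
        simp only [Real.volume_Ico, ENNReal.ofReal_sum_of_nonneg hlen]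

theorem disjoint_subfamily_of_intervals_general
    (d : ℕ) (s t : Fin d → ℝ) :
    ∃ J : Finset (Fin d),
      (∀ i ∈ J, ∀ j ∈ J, i ≠ j →
        Disjoint (Set.Ico (s i) (t i)) (Set.Ico (s j) (t j))) ∧
      (volume (⋃ j : Fin d, Set.Ico (s j) (t j))).toReal / 2 ≤ ∑ j ∈ J, (t j - s j) := by
  obtain ⟨G, -, hG, hGU⟩ :=
    exists_subset_isIrredundant_biUnion_eq (fun j => Ico (s j) (t j)) Finset.univ
  have hlen := toReal_volume_biUnion_Ico_le_sum G fun j hj => (hG.left_lt_right hj).le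
  obtain ⟨A, B, hAB, rfl, hA, hB⟩ := hG.exists_pairwiseDisjoint_union_eq
  rw [hGU, Finset.sum_union hAB] at hlen
  simp only [Finset.mem_univ, iUnion_true] at hlen
  rcases le_total (∑ j ∈ A, (t j - s j)) (∑ j ∈ B, (t j - s j)) with hle | hle
  · exact ⟨B, fun i hi j hj hij => hB hi hj hij, by linarith⟩
  · exact ⟨A, fun i hi j hj hij => hA hi hj hij, by linarith⟩

/-- Given a finite family of (bounded, half-open) real intervals `[s j, t j)`, there is a
subfamily of pairwise disjoint intervals whose total length is at least half the measure
of the union of the family. -/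
theorem disjoint_subfamily_of_intervals
    (d : ℕ) (s t : Fin d → ℝ) (h : ∀ j, s j ≤ t j) :
    ∃ J : Finset (Fin d),
      (∀ i ∈ J, ∀ j ∈ J, i ≠ j →
        Disjoint (Set.Ico (s i) (t i)) (Set.Ico (s j) (t j))) ∧
      (volume (⋃ j : Fin d, Set.Ico (s j) (t j))).toReal / 2 ≤ ∑ j ∈ J, (t j - s j) :=
  disjoint_subfamily_of_intervals_general d s t
end

section
/- Let f : ℕ → ℝ⁺ satisfy f(n+n') ≤ f(n)·f(n') for all n, n', and let E_0 = lim inf_{n→∞} (1/n) log f(n). Suppose n_0 is such that log f(n)/n < (1+δ/2)E_0 for all n ≥ n_0 (with δ > 0 fixed and n_0 ≥ 2/δ). Then for every integer n ≥ n_0 there exists n' ∈ [n, (1+δ)n] (integer) such that f(n'+j) ≥ exp(E_0·j/2)·f(n') for every positive integer j. -/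
/-!
Put `h k = log f(k) - E₀ k / 2`; `n'` is a steep point exactly when `h` attains its minimum over
`[n', ∞)` at `n'`. Let `n'` minimise `h` on `[n, (1+δ)n]`. If `n'` is not steep, then `h` drops
below `h n' ≤ h n` at some `m > (1+δ)n`. Fekete's lemma gives `E₀ m ≤ log f(m)`, while
`log f(n) < (1 + δ/2) E₀ n`; together with `h m < h n` these force `m < (1+δ)n`.
-/

open Filter Set

theorem Filter.isBoundedUnder_ge_of_liminf_ne_zero {ι : Type*} {l : Filter ι} {u : ι → ℝ}
    (h : liminf u l ≠ 0) : IsBoundedUnder (· ≥ ·) l u := by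
  contrapose! h
  rw [liminf_eq, ← Real.sSup_empty]
  congr
  exact eq_empty_of_forall_notMem fun a ha => h ⟨a, ha⟩

theorem Subadditive.liminf_le_div {u : ℕ → ℝ} (hu : Subadditive u)
    (hbdd : IsBoundedUnder (· ≥ ·) atTop fun n => u n / n) {m : ℕ} (hm : m ≠ 0) :
    liminf (fun n => u n / n) atTop ≤ u m / m := by
  have hrange := hbdd.bddBelow_range
  rw [(hu.tendsto_lim hrange).liminf_eq]
  exact hu.lim_le_div hrange hm

theorem subadditive_log_of_submultiplicative {f : ℕ → ℝ} (hf : ∀ n, 0 < f n)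
    (hsub : ∀ m n : ℕ, f (m + n) ≤ f m * f n) : Subadditive fun n => Real.log (f n) :=
  fun m n => by
    rw [← Real.log_mul (hf m).ne' (hf n).ne']
    exact Real.log_le_log (hf _) (hsub m n)

theorem Nat.exists_mem_Icc_isMinOn_Ici_or_exists_lt {α : Type*} [LinearOrder α] (h : ℕ → α)
    {n N : ℕ} (hnN : n ≤ N) :
    (∃ n' ∈ Icc n N, IsMinOn h (Ici n') n') ∨ ∃ m, N < m ∧ h m < h n := by
  obtain ⟨n', hn', hmin⟩ := (Finset.Icc n N).exists_min_image h ⟨n, Finset.mem_Icc.2 ⟨le_rfl, hnN⟩⟩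
  rw [Finset.mem_Icc] at hn'
  by_cases hsteep : IsMinOn h (Ici n') n'
  · exact Or.inl ⟨n', hn', hsteep⟩
  obtain ⟨k, hk, hlt⟩ : ∃ k, n' ≤ k ∧ h k < h n' := by
    simpa [isMinOn_iff] using hsteep
  refine Or.inr ⟨k, ?_, hlt.trans_le (hmin n (Finset.mem_Icc.2 ⟨le_rfl, hnN⟩))⟩
  by_contra! hkN
  exact (hmin k (Finset.mem_Icc.2 ⟨hn'.1.trans hk, hkN⟩)).not_gt hlt

/-- For a submultiplicative positive function `f` with exponential growth rate `E₀ > 0`,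
beyond a point `n₀` where `log f(n) / n < (1 + δ/2) E₀`, every `n ≥ n₀` admits a "steep
point" `n' ∈ [n, (1+δ)n]` from which `f` grows at exponential rate at least `E₀/2`. -/
theorem exists_steep_point
    (f : ℕ → ℝ) (hf : ∀ n, 0 < f n)
    (hsub : ∀ n n' : ℕ, f (n + n') ≤ f n * f n')
    (E₀ δ : ℝ) (hE₀ : 0 < E₀) (hδ : 0 < δ)
    (hE₀def : E₀ = Filter.liminf (fun n : ℕ => Real.log (f n) / n) Filter.atTop)
    (n₀ : ℕ) (hn₀ : 2 / δ ≤ (n₀ : ℝ))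
    (hmaj : ∀ n : ℕ, n₀ ≤ n → Real.log (f n) / n < (1 + δ / 2) * E₀) :
    ∀ n : ℕ, n₀ ≤ n → ∃ n' : ℕ, n ≤ n' ∧ (n' : ℝ) ≤ (1 + δ) * n ∧
      ∀ j : ℕ, 0 < j → Real.exp (E₀ * j / 2) * f n' ≤ f (n' + j) := by
  intro n hn
  have hn_pos : (0 : ℝ) < n := (div_pos two_pos hδ).trans_le (hn₀.trans (Nat.cast_le.2 hn))
  have hnN : n ≤ ⌊(1 + δ) * n⌋₊ := Nat.le_floor (by nlinarith)
  rcases Nat.exists_mem_Icc_isMinOn_Ici_or_exists_lt (fun k => Real.log (f k) - E₀ * k / 2) hnN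
    with ⟨n', ⟨hnn', hn'N⟩, hsteep⟩ | ⟨m, hm, hdrop⟩
  · refine ⟨n', hnn', (Nat.cast_le.2 hn'N).trans (Nat.floor_le (by positivity)), fun j _ => ?_⟩
    have := isMinOn_iff.1 hsteep (n' + j) (Nat.le_add_right n' j)
    push_cast at this
    calc Real.exp (E₀ * j / 2) * f n' = Real.exp (E₀ * j / 2 + Real.log (f n')) := by
          rw [Real.exp_add, Real.exp_log (hf n')]
      _ ≤ Real.exp (Real.log (f (n' + j))) := Real.exp_le_exp.2 (by linarith)
      _ = f (n' + j) := Real.exp_log (hf _)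
  · exfalso
    have hm_pos : (0 : ℝ) < m := by exact_mod_cast (Nat.zero_le _).trans_lt hm
    have hfekete : E₀ ≤ Real.log (f m) / m := hE₀def ▸
      (subadditive_log_of_submultiplicative hf hsub).liminf_le_div
        (isBoundedUnder_ge_of_liminf_ne_zero (hE₀def ▸ hE₀.ne')) (by exact_mod_cast hm_pos.ne')
    have hlow : E₀ * m ≤ Real.log (f m) := (le_div_iff₀ hm_pos).1 hfekete
    have hup : Real.log (f n) < (1 + δ / 2) * E₀ * n := (div_lt_iff₀ hn_pos).1 (hmaj n hn)
    have hfar : (1 + δ) * n < m := Nat.lt_of_floor_lt hm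
    nlinarith
end

section
/- For any x ∈ ℝ with x > 0: ∑_{j≥2} j·exp(−(j−1)x) = exp(−x)(2 − exp(−x))/(1 − exp(−x))², and the partial products ∏_{j=2}^{J} (1 − exp(−(j−1)x))^j are decreasing in J and bounded below by exp(−1/(1−exp(−x))³) > 0. -/
/-!
With `r = e^{-x} ∈ (0, 1)`, the series is `r ∑ n rⁿ + 2r ∑ rⁿ`. The factors of the product are
`(1 - r^{j-1})^j ∈ [0, 1]`, whence monotonicity. For the lower bound,
`log (1 - t) ≥ -t / (1 - t) ≥ -t / (1 - r)` for `0 ≤ t = r^{j-1} ≤ r`, so the logarithm of the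
product is at least `-(1 - r)⁻¹ ∑ j r^{j-1} ≥ -(1 - r)⁻³`.
-/

open Real Finset

theorem hasSum_add_two_mul_geometric_succ {𝕜 : Type*} [NormedField 𝕜] [CompleteSpace 𝕜]
    {r : 𝕜} (hr : ‖r‖ < 1) :
    HasSum (fun n : ℕ => ((n : 𝕜) + 2) * r ^ (n + 1)) (r * (2 - r) / (1 - r) ^ 2) := by
  have h1r : 1 - r ≠ 0 := sub_ne_zero.mpr fun h => by simp [← h] at hr
  have hsum := ((hasSum_coe_mul_geometric_of_norm_lt_one hr).mul_left r).add
    ((hasSum_geometric_of_norm_lt_one hr).mul_left (2 * r))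
  rw [show r * (r / (1 - r) ^ 2) + 2 * r * (1 - r)⁻¹ = r * (2 - r) / (1 - r) ^ 2 by
    field_simp; ring] at hsum
  exact hsum.congr_fun fun n => by ring

theorem sum_natCast_mul_pow_pred_le {r : ℝ} (hr0 : 0 < r) (hr1 : r < 1) (s : Finset ℕ) :
    ∑ j ∈ s, (j : ℝ) * r ^ (j - 1) ≤ 1 / (1 - r) ^ 2 := by
  have hr : ‖r‖ < 1 := by rwa [norm_of_nonneg hr0.le]
  -- multiplied by `r`, the sum is a partial sum of `∑ j r ^ j = r / (1 - r) ^ 2`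
  refine le_of_mul_le_mul_left ?_ hr0
  calc r * ∑ j ∈ s, (j : ℝ) * r ^ (j - 1) = ∑ j ∈ s, (j : ℝ) * r ^ j := by
        rw [mul_sum]
        refine sum_congr rfl fun j _ => ?_
        rcases j with _ | k
        · simp
        · rw [Nat.add_sub_cancel, pow_succ]; ring
    _ ≤ ∑' j : ℕ, (j : ℝ) * r ^ j :=
        (hasSum_coe_mul_geometric_of_norm_lt_one hr).summable.sum_le_tsum s
          fun j _ => by positivity
    _ = r * (1 / (1 - r) ^ 2) := by
        rw [tsum_coe_mul_geometric_of_norm_lt_one hr, mul_one_div]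

theorem exp_neg_div_one_sub_le_one_sub {t : ℝ} (ht : t < 1) : exp (-(t / (1 - t))) ≤ 1 - t := by
  have h1t : 0 < 1 - t := sub_pos.mpr ht
  calc exp (-(t / (1 - t))) = exp (1 - (1 - t)⁻¹) := by congr 1; field_simp; ring
    _ ≤ exp (log (1 - t)) := exp_le_exp.mpr (one_sub_inv_le_log_of_pos h1t)
    _ = 1 - t := exp_log h1t

theorem exp_neg_sum_le_prod_one_sub_pow {ι : Type*} (s : Finset ι) (t : ι → ℝ) (n : ι → ℕ)
    (ht : ∀ i ∈ s, t i < 1) :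
    exp (-∑ i ∈ s, n i * (t i / (1 - t i))) ≤ ∏ i ∈ s, (1 - t i) ^ n i := by
  rw [← sum_neg_distrib, exp_sum]
  refine prod_le_prod (fun _ _ => (exp_pos _).le) fun i hi => ?_
  rw [← mul_neg, exp_nat_mul]
  exact pow_le_pow_left₀ (exp_pos _).le (exp_neg_div_one_sub_le_one_sub (ht i hi)) _

theorem exp_neg_inv_one_sub_pow_three_le_prod {r : ℝ} (hr0 : 0 < r) (hr1 : r < 1) (J : ℕ) :
    exp (-1 / (1 - r) ^ 3) ≤ ∏ j ∈ Icc 2 J, (1 - r ^ (j - 1)) ^ j := by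
  have h1r : 0 < 1 - r := sub_pos.mpr hr1
  have hpow : ∀ j ∈ Icc 2 J, r ^ (j - 1) ≤ r := fun j hj =>
    pow_le_of_le_one hr0.le hr1.le (by grind)
  refine le_trans (exp_le_exp.mpr ?_) (exp_neg_sum_le_prod_one_sub_pow _ (fun j => r ^ (j - 1)) id
    fun j hj => (hpow j hj).trans_lt hr1)
  rw [neg_div, neg_le_neg_iff]
  calc ∑ j ∈ Icc 2 J, (j : ℝ) * (r ^ (j - 1) / (1 - r ^ (j - 1)))
      ≤ ∑ j ∈ Icc 2 J, (j : ℝ) * r ^ (j - 1) / (1 - r) := by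
        refine sum_le_sum fun j hj => ?_
        rw [mul_div_assoc]
        gcongr
        exact hpow j hj
    _ = (∑ j ∈ Icc 2 J, (j : ℝ) * r ^ (j - 1)) / (1 - r) := (sum_div _ _ _).symm
    _ ≤ 1 / (1 - r) ^ 2 / (1 - r) := by gcongr; exact sum_natCast_mul_pow_pred_le hr0 hr1 _
    _ = 1 / (1 - r) ^ 3 := by rw [div_div, ← pow_succ]

theorem antitone_prod_Icc_of_nonneg_of_le_one {f : ℕ → ℝ} (hf0 : ∀ j, 0 ≤ f j)
    (hf1 : ∀ j, f j ≤ 1) (a : ℕ) : Antitone fun J => ∏ j ∈ Icc a J, f j := fun _ _ hJK =>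
  prod_le_prod_of_subset_of_le_one (Icc_subset_Icc_right hJK) (fun j _ => hf0 j)
    fun j _ _ => hf1 j

theorem exp_neg_natCast_mul (n : ℕ) (x : ℝ) : exp (-(n : ℝ) * x) = exp (-x) ^ n := by
  rw [neg_mul, ← mul_neg, exp_nat_mul]

/-- For `x > 0`: the series `∑_{j ≥ 2} j e^{-(j-1)x}` equals
`e^{-x}(2 - e^{-x})/(1 - e^{-x})²`, and the partial products
`∏_{j=2}^J (1 - e^{-(j-1)x})^j` are decreasing in `J` and bounded below by
`exp (-1/(1 - e^{-x})³)`. -/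
theorem series_and_product_bounds (x : ℝ) (hx : 0 < x) :
    (∑' j : ℕ, ((j : ℝ) + 2) * Real.exp (-((j : ℝ) + 1) * x)) =
        Real.exp (-x) * (2 - Real.exp (-x)) / (1 - Real.exp (-x)) ^ 2 ∧
    Antitone (fun J : ℕ => ∏ j ∈ Finset.Icc 2 J,
        (1 - Real.exp (-((j : ℝ) - 1) * x)) ^ j) ∧
    ∀ J : ℕ, Real.exp (-1 / (1 - Real.exp (-x)) ^ 3) ≤
      ∏ j ∈ Finset.Icc 2 J, (1 - Real.exp (-((j : ℝ) - 1) * x)) ^ j := by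
  set r := exp (-x)
  have hr0 : 0 < r := exp_pos _
  have hr1 : r < 1 := exp_lt_one_iff.mpr (neg_neg_of_pos hx)
  have hseries (j : ℕ) : exp (-((j : ℝ) + 1) * x) = r ^ (j + 1) := by
    rw [← exp_neg_natCast_mul]; push_cast; rfl
  have hprod (J : ℕ) : ∏ j ∈ Icc 2 J, (1 - exp (-((j : ℝ) - 1) * x)) ^ j =
      ∏ j ∈ Icc 2 J, (1 - r ^ (j - 1)) ^ j := by
    refine prod_congr rfl fun j hj => ?_
    rw [← exp_neg_natCast_mul, Nat.cast_sub (by grind), Nat.cast_one]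
  refine ⟨?_, ?_, fun J => ?_⟩
  · simp only [hseries]
    exact (hasSum_add_two_mul_geometric_succ (by rwa [norm_of_nonneg hr0.le])).tsum_eq
  · simp only [hprod]
    have hle (j : ℕ) : r ^ (j - 1) ≤ 1 := pow_le_one₀ hr0.le hr1.le
    exact antitone_prod_Icc_of_nonneg_of_le_one (fun j => pow_nonneg (sub_nonneg.mpr (hle j)) j)
      (fun j => pow_le_one₀ (sub_nonneg.mpr (hle j)) (sub_le_self _ (pow_nonneg hr0.le _))) 2
  · rw [hprod]
    exact exp_neg_inv_one_sub_pow_three_le_prod hr0 hr1 J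
end
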